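/- Let F̄(x) = (1/2)‖Āx − b̄‖² + τ‖x‖₁ with τ > 0 and optimal value F̄* attained at x*. Then for any x ∈ ℝⁿ: |‖Āx − b̄‖² − ‖Āx* − b̄‖²| ≤ 2(√F̄(x) + √F̄*)·√(F̄(x) − F̄*), and |‖x‖₁ − ‖x*‖₁| ≤ (1/τ)[F̄(x) − F̄* + (√F̄(x) + √F̄*)·√(F̄(x) − F̄*)]. -/

import Mathlib

/-!
Write `r(y) = Āy − b̄`. Comparing `F̄(x*)` with `F̄` on the segment from `x*` to `x` and letting the
step tend to `0` (the `ℓ₁` term is convex) gives the first-order condition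
`⟪r(x*), r(x) − r(x*)⟫ + τ(‖x‖₁ − ‖x*‖₁) ≥ 0`, and the exact expansion of the quadratic part then
yields `‖Ā(x − x*)‖² ≤ 2(F̄(x) − F̄*)`. The first bound follows from
`|‖u‖² − ‖v‖²| ≤ (‖u‖ + ‖v‖)‖u − v‖` together with `‖r(y)‖ ≤ √(2F̄(y))`, and the second from
`τ(‖x‖₁ − ‖x*‖₁) = (F̄(x) − F̄*) − (‖r(x)‖² − ‖r(x*)‖²)/2`.
-/

open Matrix

/-- `F̄(x) = (1/2)‖Āx − b̄‖² + τ‖x‖₁`. -/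
noncomputable def lsObj {m n : ℕ} (Ab : Matrix (Fin m) (Fin n) ℝ) (bb : Fin m → ℝ)
    (τ : ℝ) (x : Fin n → ℝ) : ℝ :=
  (1 / 2) * ((Ab.mulVec x - bb) ⬝ᵥ (Ab.mulVec x - bb)) + τ * ∑ i, |x i|

open Filter Topology Set RealInnerProductSpace

theorem nonneg_of_forall_mul_add_sq_mul_nonneg {c D : ℝ}
    (h : ∀ t : ℝ, 0 < t → t ≤ 1 → 0 ≤ t * c + t ^ 2 * D) : 0 ≤ c := by
  have hlim : Tendsto (fun t : ℝ => c + t * D) (𝓝[>] 0) (𝓝 c) := by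
    have : Tendsto (fun t : ℝ => c + t * D) (𝓝 0) (𝓝 (c + 0 * D)) :=
      tendsto_const_nhds.add (tendsto_id.mul_const D)
    simpa using this.mono_left nhdsWithin_le_nhds
  refine ge_of_tendsto hlim ?_
  filter_upwards [Ioc_mem_nhdsGT zero_lt_one] with t ⟨ht0, ht1⟩
  have ht := h t ht0 ht1
  rw [show t * c + t ^ 2 * D = t * (c + t * D) by ring] at ht
  exact (mul_nonneg_iff_of_pos_left ht0).mp ht

theorem abs_sq_norm_sub_sq_norm_le {F : Type*} [SeminormedAddCommGroup F] (u v : F) :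
    |‖u‖ ^ 2 - ‖v‖ ^ 2| ≤ (‖u‖ + ‖v‖) * ‖u - v‖ := by
  rw [sq_sub_sq, abs_mul, abs_of_nonneg (by positivity)]
  exact mul_le_mul_of_nonneg_left (abs_norm_sub_norm_le u v) (by positivity)

section RegLeastSquares

variable {E F : Type*} [AddCommGroup E] [Module ℝ E] [NormedAddCommGroup F]
  [InnerProductSpace ℝ F] {A : E →ₗ[ℝ] F} {b : F} {f : E → ℝ}

variable (A b f) in
noncomputable def regLeastSquares (y : E) : ℝ :=
  ‖A y - b‖ ^ 2 / 2 + f y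

theorem sq_norm_map_sub_le_regLeastSquares_sub (hf : ConvexOn ℝ univ f) {x₀ : E}
    (hmin : ∀ y, regLeastSquares A b f x₀ ≤ regLeastSquares A b f y) (x : E) :
    ‖A x - A x₀‖ ^ 2 ≤ 2 * (regLeastSquares A b f x - regLeastSquares A b f x₀) := by
  set u := A x₀ - b
  set d := A x - A x₀
  have hc : 0 ≤ ⟪u, d⟫ + (f x - f x₀) := by
    refine nonneg_of_forall_mul_add_sq_mul_nonneg (D := ‖d‖ ^ 2 / 2) fun t ht0 ht1 => ?_
    have hAy : A (x₀ + t • (x - x₀)) - b = u + t • d := by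
      simp only [u, d, map_add, map_smul, map_sub]; abel
    have hfy : f (x₀ + t • (x - x₀)) ≤ (1 - t) * f x₀ + t * f x := by
      rw [show x₀ + t • (x - x₀) = (1 - t) • x₀ + t • x by module]
      exact hf.2 (mem_univ x₀) (mem_univ x) (by linarith) ht0.le (by ring)
    have := hmin (x₀ + t • (x - x₀))
    simp only [regLeastSquares, hAy, norm_add_sq_real, norm_smul, inner_smul_right,
      Real.norm_eq_abs, abs_of_pos ht0] at this
    nlinarith
  have hx : A x - b = u + d := by simp only [u, d]; abel
  rw [regLeastSquares, regLeastSquares, hx, norm_add_sq_real]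
  linarith

theorem sq_norm_sub_le_two_mul_regLeastSquares (hf : ∀ y, 0 ≤ f y) (y : E) :
    ‖A y - b‖ ^ 2 ≤ 2 * regLeastSquares A b f y := by
  rw [regLeastSquares]
  linarith [hf y]

theorem abs_sq_norm_residual_sub_le (hf : ConvexOn ℝ univ f) (hf₀ : ∀ y, 0 ≤ f y) {x₀ : E}
    (hmin : ∀ y, regLeastSquares A b f x₀ ≤ regLeastSquares A b f y) (x : E) :
    |‖A x - b‖ ^ 2 - ‖A x₀ - b‖ ^ 2| ≤
      2 * (√(regLeastSquares A b f x) + √(regLeastSquares A b f x₀)) *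
        √(regLeastSquares A b f x - regLeastSquares A b f x₀) := by
  have hle : ∀ {a c : ℝ}, a ^ 2 ≤ 2 * c → |a| ≤ √2 * √c := fun h => by
    rw [← Real.sqrt_mul zero_le_two, ← Real.sqrt_sq_eq_abs]
    exact Real.sqrt_le_sqrt h
  have hr := hle (sq_norm_sub_le_two_mul_regLeastSquares (A := A) (b := b) hf₀ x)
  have hr₀ := hle (sq_norm_sub_le_two_mul_regLeastSquares (A := A) (b := b) hf₀ x₀)
  have hd := hle (sq_norm_map_sub_le_regLeastSquares_sub hf hmin x)
  rw [abs_norm] at hr hr₀ hd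
  calc |‖A x - b‖ ^ 2 - ‖A x₀ - b‖ ^ 2|
      ≤ (‖A x - b‖ + ‖A x₀ - b‖) * ‖A x - A x₀‖ := by
        simpa only [sub_sub_sub_cancel_right] using abs_sq_norm_sub_sq_norm_le (A x - b) (A x₀ - b)
    _ ≤ (√2 * √(regLeastSquares A b f x) + √2 * √(regLeastSquares A b f x₀)) *
          (√2 * √(regLeastSquares A b f x - regLeastSquares A b f x₀)) := by gcongr
    _ = 2 * (√(regLeastSquares A b f x) + √(regLeastSquares A b f x₀)) *
          √(regLeastSquares A b f x - regLeastSquares A b f x₀) := by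
        linear_combination (√(regLeastSquares A b f x) + √(regLeastSquares A b f x₀)) *
          √(regLeastSquares A b f x - regLeastSquares A b f x₀) * Real.mul_self_sqrt zero_le_two

theorem abs_regularizer_sub_le (hf : ConvexOn ℝ univ f) (hf₀ : ∀ y, 0 ≤ f y) {x₀ : E}
    (hmin : ∀ y, regLeastSquares A b f x₀ ≤ regLeastSquares A b f y) (x : E) :
    |f x - f x₀| ≤ regLeastSquares A b f x - regLeastSquares A b f x₀ +
      (√(regLeastSquares A b f x) + √(regLeastSquares A b f x₀)) *
        √(regLeastSquares A b f x - regLeastSquares A b f x₀) := by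
  have hgap : 0 ≤ regLeastSquares A b f x - regLeastSquares A b f x₀ := sub_nonneg.mpr (hmin x)
  have hres := abs_sq_norm_residual_sub_le hf hf₀ hmin x
  have hsplit : f x - f x₀ = (regLeastSquares A b f x - regLeastSquares A b f x₀) -
      (‖A x - b‖ ^ 2 - ‖A x₀ - b‖ ^ 2) / 2 := by
    simp only [regLeastSquares]; ring
  rw [hsplit]
  refine (abs_sub _ _).trans ?_
  rw [abs_of_nonneg hgap, abs_div, abs_two]
  linarith

end RegLeastSquares

theorem dotProduct_self_eq_sq_norm_toLp {ι : Type*} [Fintype ι] (v : ι → ℝ) :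
    v ⬝ᵥ v = ‖WithLp.toLp 2 v‖ ^ 2 := by
  rw [← real_inner_self_eq_norm_sq, EuclideanSpace.inner_toLp_toLp, star_trivial]

theorem convexOn_sum_abs (ι : Type*) [Fintype ι] : ConvexOn ℝ univ fun y : ι → ℝ => ∑ i, |y i| := by
  simpa [Function.comp_def, PiLp.norm_eq_of_L1] using
    (convexOn_norm convex_univ).comp_linearMap (WithLp.linearEquiv 1 ℝ (ι → ℝ)).symm.toLinearMap

/-- for any optimal `x*`,
`|‖Āx − b̄‖² − ‖Āx* − b̄‖²| ≤ 2(√F̄(x) + √F̄*)√(F̄(x) − F̄*)` and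
`|‖x‖₁ − ‖x*‖₁| ≤ (1/τ)[F̄(x) − F̄* + (√F̄(x) + √F̄*)√(F̄(x) − F̄*)]`. -/
theorem stmt12 {m n : ℕ} (Ab : Matrix (Fin m) (Fin n) ℝ) (bb : Fin m → ℝ) (τ : ℝ)
    (hτ : 0 < τ) (xstar : Fin n → ℝ)
    (hopt : ∀ y, lsObj Ab bb τ xstar ≤ lsObj Ab bb τ y) :
    ∀ x : Fin n → ℝ,
      |(Ab.mulVec x - bb) ⬝ᵥ (Ab.mulVec x - bb) -
          (Ab.mulVec xstar - bb) ⬝ᵥ (Ab.mulVec xstar - bb)| ≤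
        2 * (Real.sqrt (lsObj Ab bb τ x) + Real.sqrt (lsObj Ab bb τ xstar)) *
          Real.sqrt (lsObj Ab bb τ x - lsObj Ab bb τ xstar) ∧
      abs ((∑ i, |x i|) - ∑ i, |xstar i|) ≤
        (1 / τ) * (lsObj Ab bb τ x - lsObj Ab bb τ xstar +
          (Real.sqrt (lsObj Ab bb τ x) + Real.sqrt (lsObj Ab bb τ xstar)) *
            Real.sqrt (lsObj Ab bb τ x - lsObj Ab bb τ xstar)) := by
  intro x
  set A := (WithLp.linearEquiv 2 ℝ (Fin m → ℝ)).symm.toLinearMap ∘ₗ Ab.mulVecLin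
  set f : (Fin n → ℝ) → ℝ := fun y => τ * ∑ i, |y i|
  have hres : ∀ y, (Ab *ᵥ y - bb) ⬝ᵥ (Ab *ᵥ y - bb) = ‖A y - WithLp.toLp 2 bb‖ ^ 2 := fun y =>
    dotProduct_self_eq_sq_norm_toLp _
  have hobj : lsObj Ab bb τ = regLeastSquares A (WithLp.toLp 2 bb) f := by
    ext y; rw [lsObj, regLeastSquares, hres]; ring
  have hf : ConvexOn ℝ univ f := (convexOn_sum_abs (Fin n)).smul hτ.le
  have hf₀ : ∀ y, 0 ≤ f y := fun y => by positivity
  rw [hobj] at hopt ⊢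
  refine ⟨by simpa only [hres] using abs_sq_norm_residual_sub_le hf hf₀ hopt x, ?_⟩
  rw [one_div, ← div_eq_inv_mul, le_div_iff₀ hτ]
  calc abs ((∑ i, |x i|) - ∑ i, |xstar i|) * τ = |f x - f xstar| := by
        rw [← mul_sub, abs_mul, abs_of_pos hτ, mul_comm]
    _ ≤ _ := abs_regularizer_sub_le hf hf₀ hopt x
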